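/- Let x̄ ∈ A_s with x̄ ≠ 0 and let 0 < δ < min{|x̄_j| : x̄_j ≠ 0}. Then for every x ∈ A_s with ‖x − x̄‖ ≤ δ, every index set J of cardinality s with I(x) ⊆ J, and every vector v orthogonal to the coordinate subspace A_J (i.e., v_i = 0 is not required, but ⟨v, e_i⟩ = 0 for all i ∈ J), one has ⟨v, x̄ − x⟩ = 0. In particular, A_s is (0,δ)-subregular at x̄: ⟨v, x̄ − x⟩ ≤ 0 for every such normal vector v to A_s at x. -/

import Mathlib

/-!
Away from the support of `x` the vector `x̄ - x` reduces to `x̄`, and every nonzero entry of `x̄`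
exceeds `δ ≥ ‖x - x̄‖` in absolute value, so it cannot be matched by a zero entry of `x`. Hence
`x̄ - x` is supported in `J`, where `v` vanishes, and the two vectors have disjoint supports.
-/

open scoped InnerProductSpace

/-- Number of nonzero entries of a vector (the ℓ₀-"norm"). -/
noncomputable def sparsity {n : ℕ} (x : EuclideanSpace ℝ (Fin n)) : ℕ :=
  (Finset.univ.filter (fun i => x i ≠ 0)).card

/-- `A_s`, the set of vectors with at most `s` nonzero entries. -/
def Asp (n s : ℕ) : Set (EuclideanSpace ℝ (Fin n)) := {x | sparsity x ≤ s}

namespace EuclideanSpace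

variable {ι : Type*} [Fintype ι]

lemma apply_eq_zero_of_norm_sub_le {x y : EuclideanSpace ℝ ι} {δ : ℝ} (hxy : ‖x - y‖ ≤ δ)
    (hy : ∀ j, y j ≠ 0 → δ < |y j|) {i : ι} (hxi : x i = 0) : y i = 0 := by
  by_contra hyi
  have : |y i| ≤ ‖x - y‖ := by
    simpa [hxi, Real.dist_eq, abs_sub_comm, dist_eq_norm] using PiLp.dist_apply_le x y i
  linarith [hy i hyi]

lemma apply_eq_zero_of_inner_single_eq_zero [DecidableEq ι] {v : EuclideanSpace ℝ ι} {i : ι}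
    (h : ⟪v, single i (1 : ℝ)⟫_ℝ = 0) : v i = 0 := by
  simpa [inner_single_right] using h

lemma inner_eq_zero_of_disjoint_support {v w : EuclideanSpace ℝ ι}
    (h : ∀ i, v i = 0 ∨ w i = 0) : ⟪v, w⟫_ℝ = 0 := by
  rw [PiLp.inner_apply]
  refine Finset.sum_eq_zero fun i _ => ?_
  rcases h i with hv | hw
  · simp [hv]
  · simp [hw]

end EuclideanSpace

open EuclideanSpace in
theorem stmt4 {n s : ℕ} (xb : EuclideanSpace ℝ (Fin n))
    (δ : ℝ) (hsmall : ∀ j, xb j ≠ 0 → δ < |xb j|) :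
    ∀ x ∈ Asp n s, ‖x - xb‖ ≤ δ →
      ∀ J : Finset (Fin n), J.card = s → (∀ i, x i ≠ 0 → i ∈ J) →
        ∀ v : EuclideanSpace ℝ (Fin n),
          (∀ i ∈ J, ⟪v, EuclideanSpace.single i (1:ℝ)⟫_ℝ = 0) →
          ⟪v, xb - x⟫_ℝ = 0 := by
  intro x _ hdist J _ hsupp v hv
  refine inner_eq_zero_of_disjoint_support fun i => ?_
  by_cases hi : i ∈ J
  · exact .inl (apply_eq_zero_of_inner_single_eq_zero (hv i hi))
  · have hxi : x i = 0 := not_imp_comm.mp (hsupp i) hi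
    right
    simp [hxi, apply_eq_zero_of_norm_sub_le hdist hsmall hxi]
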